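/- In the setting of Theorem 1 with a common transmit SNR γ_c = γ_r = γ and δ > 0, writing P_out(γ) for the outage probability P(max(γ₁,γ₂) < γ_th) + P(γ₁ ≥ γ_th and max(γ₃,γ₂) < γ_th), the diversity order equals one: lim_{γ→∞} ( − log(P_out(γ)) / log(γ) ) = 1. -/

import Mathlib

/-!
Both outage events force the direct link to fail, `γ₂ < γ_th`, which for `ρ_SDf ≥ 0` means
`ρ_SDf γ < c := γ_th / (a_f - a_n γ_th)`; this has probability at most
`1 - exp (-c / (β_SDf γ)) ≤ c / (β_SDf γ)`. Conversely, once the residual self-interference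
`V² δ` exceeds `a_f / γ_th` and `ρ_SR ≤ 1`, the relay SINR `γ₁` stays below `γ_th`, so the first
event contains `{ρ_SR ≤ 1, ρ_SDf ≤ c / (2γ), V > M}` for a fixed `M`. By independence its
probability is a positive constant times `1 - exp (-c / (2 β_SDf γ)) ≥ c / (4 β_SDf γ)`.
Thus `P_out(γ)` is of exact order `1/γ`, and `-log P_out(γ) / log γ → 1`.
-/

open MeasureTheory ProbabilityTheory Real Filter Set Topology

theorem tendsto_neg_log_div_log_of_le_rpow {f : ℝ → ℝ} {A B d : ℝ} (hB : 0 < B)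
    (hf : ∀ᶠ g in atTop, B * g ^ (-d) ≤ f g ∧ f g ≤ A * g ^ (-d)) :
    Tendsto (fun g => -log (f g) / log g) atTop (𝓝 d) := by
  have hlim : ∀ C, Tendsto (fun g => (d * log g - log C) / log g) atTop (𝓝 d) := by
    intro C
    have h := (tendsto_const_nhds (x := d)).sub
      ((tendsto_const_nhds (x := log C)).mul tendsto_log_atTop.inv_tendsto_atTop)
    rw [mul_zero, sub_zero] at h
    refine h.congr' ?_
    filter_upwards [eventually_gt_atTop 1] with g hg
    rw [Pi.inv_apply]
    field_simp [(log_pos hg).ne']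
  have hlog : ∀ᶠ g in atTop, 0 < log g ∧ d * log g - log A ≤ -log (f g) ∧
      -log (f g) ≤ d * log g - log B := by
    filter_upwards [hf, eventually_gt_atTop 1] with g ⟨hlow, hup⟩ hg
    have hg₀ : 0 < g := one_pos.trans hg
    have hpow : 0 < g ^ (-d) := rpow_pos_of_pos hg₀ _
    have hfg : 0 < f g := (mul_pos hB hpow).trans_le hlow
    have hA : 0 < A := pos_of_mul_pos_left (hfg.trans_le hup) hpow.le
    have hlog_mul : ∀ {C}, 0 < C → log (C * g ^ (-d)) = log C - d * log g := fun hC => by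
      rw [log_mul hC.ne' hpow.ne', log_rpow hg₀]
      ring
    refine ⟨log_pos hg, ?_, ?_⟩
    · linarith [log_le_log hfg hup, hlog_mul hA]
    · linarith [log_le_log (mul_pos hB hpow) hlow, hlog_mul hB]
  refine tendsto_of_tendsto_of_tendsto_of_le_of_le' (hlim A) (hlim B) ?_ ?_ <;>
    filter_upwards [hlog] with g ⟨hlog_pos, hge, hle⟩
  exacts [div_le_div_of_nonneg_right hge hlog_pos.le, div_le_div_of_nonneg_right hle hlog_pos.le]

theorem one_sub_exp_neg_le_self (x : ℝ) : 1 - exp (-x) ≤ x := by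
  linarith [one_sub_le_exp_neg x]

theorem half_le_one_sub_exp_neg {x : ℝ} (hx : 0 ≤ x) (hx1 : x ≤ 1) : x / 2 ≤ 1 - exp (-x) := by
  have h : exp (-x) * (1 + x) ≤ 1 := by
    calc exp (-x) * (1 + x) ≤ exp (-x) * exp x := by gcongr; linarith [add_one_le_exp x]
      _ = 1 := by rw [← exp_add, neg_add_cancel, exp_zero]
  nlinarith [exp_pos (-x)]

theorem MeasureTheory.measureReal_mono_ae {Ω : Type*} [MeasurableSpace Ω] {μ : Measure Ω}
    [IsFiniteMeasure μ] {s t : Set Ω} (h : s ≤ᵐ[μ] t) : μ.real s ≤ μ.real t :=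
  ENNReal.toReal_mono (measure_ne_top _ _) (measure_mono_ae h)

theorem ProbabilityTheory.iIndepFun.measureReal_iInter_preimage_eq_prod {Ω ι : Type*}
    [MeasurableSpace Ω] {μ : Measure Ω} [Fintype ι] {β : ι → Type*}
    {m : ∀ i, MeasurableSpace (β i)} {X : ∀ i, Ω → β i} (h : iIndepFun X μ)
    {S : ∀ i, Set (β i)} (hS : ∀ i, MeasurableSet (S i)) :
    μ.real (⋂ i, X i ⁻¹' S i) = ∏ i, μ.real (X i ⁻¹' S i) := by
  simpa [measureReal_def, ENNReal.toReal_prod] using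
    congrArg ENNReal.toReal (h.measure_inter_preimage_eq_mul Finset.univ fun i _ => hS i)

namespace ProbabilityTheory

theorem ae_nonneg_expMeasure (r : ℝ) : ∀ᵐ x ∂expMeasure r, 0 ≤ x := by
  rw [ae_iff, show {x : ℝ | ¬0 ≤ x} = Iio 0 by ext; simp, expMeasure, gammaMeasure,
    withDensity_apply _ measurableSet_Iio]
  exact setLIntegral_eq_zero measurableSet_Iio fun x hx => gammaPDF_of_neg hx

theorem expMeasure_real_Iic {r x : ℝ} (hr : 0 < r) (hx : 0 ≤ x) :
    (expMeasure r).real (Iic x) = 1 - exp (-(r * x)) := by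
  have := isProbabilityMeasure_expMeasure hr
  rw [← cdf_eq_real, cdf_expMeasure_eq hr, if_pos hx]

theorem expMeasure_real_Ioi {r x : ℝ} (hr : 0 < r) (hx : 0 ≤ x) :
    (expMeasure r).real (Ioi x) = exp (-(r * x)) := by
  have := isProbabilityMeasure_expMeasure hr
  rw [← compl_Iic, measureReal_compl measurableSet_Iic, probReal_univ, expMeasure_real_Iic hr hx]
  ring

end ProbabilityTheory

theorem snr_lt_iff {a b γ ρ g : ℝ} (hb : 0 ≤ b) (hba : b * γ < a) (hρ : 0 ≤ ρ) (hg : 0 < g) :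
    a * ρ * g / (b * ρ * g + 1) < γ ↔ ρ * g < γ / (a - b * γ) := by
  rw [div_lt_iff₀ (by positivity), lt_div_iff₀ (by linarith)]
  constructor <;> intro h <;> linarith

theorem sinr_lt_of_le_one {a b γ ρ u e g : ℝ} (ha : 0 ≤ a) (hb : 0 ≤ b) (hγ : 0 < γ)
    (hau : a < γ * u) (he : 0 ≤ e) (hρ₀ : 0 ≤ ρ) (hρ₁ : ρ ≤ 1) (hg : 0 < g) :
    a * ρ * g / (b * ρ * g + u * g + e * g + 1) < γ := by
  have hu : 0 < u := pos_of_mul_pos_right (ha.trans_lt hau) hγ.le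
  have hsignal : a * ρ * g ≤ a * 1 * g := by gcongr
  have hinterf : a * g < γ * u * g := mul_lt_mul_of_pos_right hau hg
  have hrest : 0 ≤ γ * (b * ρ * g + e * g + 1) := by positivity
  rw [div_lt_iff₀ (by positivity)]
  linarith

theorem sinr_lt_of_strong_interference {a b γ δ M v ρ e g : ℝ} (ha : 0 ≤ a) (hb : 0 ≤ b)
    (hγ : 0 < γ) (hM₁ : 1 ≤ M) (hM : a < γ * δ * M) (hv : M < v) (he : 0 ≤ e)
    (hρ₀ : 0 ≤ ρ) (hρ₁ : ρ ≤ 1) (hg : 0 < g) :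
    a * ρ * g / (b * ρ * g + v ^ 2 * δ * g + e * g + 1) < γ := by
  have hv₂ : M < v ^ 2 := by nlinarith
  have hγδ : 0 < γ * δ := pos_of_mul_pos_left (ha.trans_lt hM) (zero_le_one.trans hM₁)
  refine sinr_lt_of_le_one ha hb hγ ?_ he hρ₀ hρ₁ hg
  calc a < γ * δ * M := hM
    _ ≤ γ * δ * v ^ 2 := by gcongr
    _ = γ * (v ^ 2 * δ) := by ring

section ExponentialVariable

variable {Ω : Type*} [MeasurableSpace Ω] {P : Measure Ω} {X : Ω → ℝ} {r : ℝ}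

theorem ae_nonneg_of_map_eq_expMeasure (hX : Measurable X) (hlaw : P.map X = expMeasure r) :
    ∀ᵐ ω ∂P, 0 ≤ X ω :=
  ae_of_ae_map hX.aemeasurable (hlaw ▸ ae_nonneg_expMeasure r)

theorem measureReal_preimage_Iic_of_map_eq_expMeasure (hX : Measurable X) (hr : 0 < r)
    (hlaw : P.map X = expMeasure r) {x : ℝ} (hx : 0 ≤ x) :
    P.real (X ⁻¹' Iic x) = 1 - exp (-(r * x)) := by
  rw [← map_measureReal_apply hX measurableSet_Iic, hlaw, expMeasure_real_Iic hr hx]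

theorem measureReal_preimage_Ioi_of_map_eq_expMeasure (hX : Measurable X) (hr : 0 < r)
    (hlaw : P.map X = expMeasure r) {x : ℝ} (hx : 0 ≤ x) :
    P.real (X ⁻¹' Ioi x) = exp (-(r * x)) := by
  rw [← map_measureReal_apply hX measurableSet_Ioi, hlaw, expMeasure_real_Ioi hr hx]

theorem measureReal_snr_lt_le [IsFiniteMeasure P] (hX : Measurable X) (hr : 0 < r)
    (hlaw : P.map X = expMeasure r) {a b γ g : ℝ} (hb : 0 ≤ b) (hba : b * γ < a) (hγ : 0 < γ)
    (hg : 0 < g) :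
    P.real {ω | a * X ω * g / (b * X ω * g + 1) < γ} ≤ r * (γ / (a - b * γ)) / g := by
  have hc : 0 ≤ γ / (a - b * γ) / g := by have := sub_pos.2 hba; positivity
  calc P.real {ω | a * X ω * g / (b * X ω * g + 1) < γ}
      ≤ P.real (X ⁻¹' Iic (γ / (a - b * γ) / g)) := by
        refine measureReal_mono_ae ?_
        filter_upwards [ae_nonneg_of_map_eq_expMeasure hX hlaw] with ω hω hlt
        exact (le_div_iff₀ hg).2 ((snr_lt_iff hb hba hω hg).1 hlt).le
    _ = 1 - exp (-(r * (γ / (a - b * γ) / g))) :=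
        measureReal_preimage_Iic_of_map_eq_expMeasure hX hr hlaw hc
    _ ≤ r * (γ / (a - b * γ)) / g := by
        rw [mul_div_assoc]
        exact one_sub_exp_neg_le_self _

end ExponentialVariable

theorem exists_le_measureReal_far_outage {Ω : Type*} [MeasurableSpace Ω] {P : Measure Ω}
    [IsProbabilityMeasure P] {rSR rSDf rRDf rLI V : Ω → ℝ}
    (hindep : iIndepFun ![rSR, rSDf, rRDf, rLI, V] P) {νSR νSDf νV : ℝ}
    (hνSR : 0 < νSR) (hνSDf : 0 < νSDf) (hνV : 0 < νV)
    (hrSR : Measurable rSR) (hrSDf : Measurable rSDf) (hV : Measurable V)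
    (hlawSR : P.map rSR = expMeasure νSR) (hlawSDf : P.map rSDf = expMeasure νSDf)
    (hlawV : P.map V = expMeasure νV) (hLI : ∀ᵐ ω ∂P, 0 ≤ rLI ω)
    {δ w an af γth : ℝ} (hδ : 0 < δ) (hw : 0 ≤ w) (han : 0 ≤ an) (hγth : 0 < γth)
    (hdec : an * γth < af) :
    ∃ K > 0, ∃ s > 0, ∀ g > 0, K * (1 - exp (-(s / g))) ≤
      P.real {ω | max (af * rSR ω * g /
                    (an * rSR ω * g + (V ω) ^ 2 * δ * g + rLI ω * w * g + 1))
                 (af * rSDf ω * g / (an * rSDf ω * g + 1)) < γth} := by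
  have haf : 0 < af := by nlinarith
  set c := γth / (af - an * γth)
  have hc : 0 < c := div_pos hγth (by linarith)
  set M := af / (γth * δ) + 1
  have hM : af < γth * δ * M := by
    simp only [M]
    field_simp
    linarith [mul_pos hγth hδ]
  have hM₁ : 1 ≤ M := by simp only [M]; linarith [div_pos haf (mul_pos hγth hδ)]
  have hp₁ : 0 < 1 - exp (-νSR) := by
    rw [sub_pos, exp_lt_one_iff]
    linarith
  refine ⟨(1 - exp (-νSR)) * exp (-(νV * M)), by positivity, νSDf * c / 2, by positivity,
    fun g hg => ?_⟩
  set E := ⋂ i, ![rSR, rSDf, rRDf, rLI, V] i ⁻¹' ![Iic 1, Iic (c / (2 * g)), univ, univ, Ioi M] i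
  have hE : P.real E =
      (1 - exp (-νSR)) * (1 - exp (-(νSDf * (c / (2 * g))))) * exp (-(νV * M)) := by
    rw [hindep.measureReal_iInter_preimage_eq_prod fun i => by fin_cases i <;> simp]
    simp only [Fin.prod_univ_five, Matrix.cons_val_zero, Matrix.cons_val_one, Matrix.cons_val,
      preimage_univ, probReal_univ, mul_one]
    rw [measureReal_preimage_Iic_of_map_eq_expMeasure hrSR hνSR hlawSR zero_le_one, mul_one,
      measureReal_preimage_Iic_of_map_eq_expMeasure hrSDf hνSDf hlawSDf (by positivity),
      measureReal_preimage_Ioi_of_map_eq_expMeasure hV hνV hlawV (by positivity)]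
  calc (1 - exp (-νSR)) * exp (-(νV * M)) * (1 - exp (-(νSDf * c / 2 / g))) = P.real E := by
        rw [hE]
        field_simp
    _ ≤ _ := measureReal_mono_ae ?_
  filter_upwards [ae_nonneg_of_map_eq_expMeasure hrSR hlawSR,
    ae_nonneg_of_map_eq_expMeasure hrSDf hlawSDf, hLI] with ω hSR hSDf hLI hω
  have hω := mem_iInter.1 hω
  refine max_lt (sinr_lt_of_strong_interference haf.le han hγth hM₁ hM (hω 4)
    (mul_nonneg hLI hw) hSR (hω 0) hg) ((snr_lt_iff han hdec hSDf hg).2 ?_)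
  calc rSDf ω * g ≤ c / (2 * g) * g := by gcongr; exact hω 1
    _ < c := by field_simp; linarith

theorem diversity_order_far_device_general
    {Ω : Type*} [MeasurableSpace Ω] (P : Measure Ω) [IsProbabilityMeasure P]
    (βSR βRR βLI βSDf : ℝ)
    (hβSR : 0 < βSR) (hβRR : 0 < βRR) (hβSDf : 0 < βSDf)
    (rSR rSDf rRDf rLI V : Ω → ℝ)
    (hrSR : Measurable rSR) (hrSDf : Measurable rSDf)
    (hrLI : Measurable rLI) (hV : Measurable V)
    (hlawSR : Measure.map rSR P = expMeasure (1 / βSR))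
    (hlawSDf : Measure.map rSDf P = expMeasure (1 / βSDf))
    (hlawLI : Measure.map rLI P = expMeasure (1 / βLI))
    (hlawV : Measure.map V P = expMeasure (1 / βRR))
    (hindep : iIndepFun ![rSR, rSDf, rRDf, rLI, V] P)
    (δ w an af γth : ℝ)
    (hδ : δ ∈ Set.Ioc (0 : ℝ) 1) (hw : w = 0 ∨ w = 1)
    (han : 0 < an)
    (hγth : 0 < γth) (hdec : an * γth < af)
    (Pout : ℝ → ℝ)
    (hPout : ∀ g : ℝ,
      Pout g =
        (P {ω | max (af * rSR ω * g /
                    (an * rSR ω * g + (V ω) ^ 2 * δ * g + rLI ω * w * g + 1))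
                 (af * rSDf ω * g / (an * rSDf ω * g + 1)) < γth}).toReal
        + (P {ω | γth ≤ af * rSR ω * g /
                    (an * rSR ω * g + (V ω) ^ 2 * δ * g + rLI ω * w * g + 1)
               ∧ max (af * rRDf ω * g / (an * rRDf ω * g + 1))
                     (af * rSDf ω * g / (an * rSDf ω * g + 1)) < γth}).toReal) :
    Tendsto (fun g : ℝ => -Real.log (Pout g) / Real.log g) atTop (nhds 1) := by
  have hw₀ : 0 ≤ w := by rcases hw with rfl | rfl <;> norm_num
  obtain ⟨K, hK, s, hs, hlower⟩ := exists_le_measureReal_far_outage hindep (by positivity)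
    (by positivity) (by positivity) hrSR hrSDf hV hlawSR hlawSDf hlawV
    (ae_nonneg_of_map_eq_expMeasure hrLI hlawLI) hδ.1 hw₀ han.le hγth hdec
  refine tendsto_neg_log_div_log_of_le_rpow (A := 2 * (1 / βSDf * (γth / (af - an * γth))))
    (B := K * s / 2) (by positivity) ?_
  filter_upwards [eventually_ge_atTop s] with g hgs
  have hg : 0 < g := hs.trans_le hgs
  have hupper := measureReal_snr_lt_le (P := P) hrSDf (by positivity) hlawSDf han.le hdec hγth hg
  rw [rpow_neg_one, hPout, ← measureReal_def, ← measureReal_def]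
  constructor
  · calc K * s / 2 * g⁻¹ = K * (s / g / 2) := by ring
      _ ≤ K * (1 - exp (-(s / g))) := by
        gcongr
        exact half_le_one_sub_exp_neg (by positivity) ((div_le_one hg).2 hgs)
      _ ≤ _ := (hlower g hg).trans (le_add_of_nonneg_right measureReal_nonneg)
  · refine (add_le_add (measureReal_mono ?_) (measureReal_mono ?_)).trans
      ((add_le_add hupper hupper).trans_eq (by ring))
    · exact fun ω (hω : max _ _ < γth) => (max_lt_iff.1 hω).2
    · exact fun ω (hω : _ ∧ max _ _ < γth) => (max_lt_iff.1 hω.2).2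

/-- **Diversity order of the far IoT device equals one** (Corollary 1 / equation (20)),
with common transmit SNR `γ_c = γ_r = g → ∞`:
`lim_{g→∞} (− log P_out(g) / log g) = 1`. -/
theorem diversity_order_far_device
    {Ω : Type*} [MeasurableSpace Ω] (P : Measure Ω) [IsProbabilityMeasure P]
    (βSR βRR βLI βSDf βRDf : ℝ)
    (hβSR : 0 < βSR) (hβRR : 0 < βRR) (hβLI : 0 < βLI) (hβSDf : 0 < βSDf) (hβRDf : 0 < βRDf)
    (rSR rSDf rRDf rLI V : Ω → ℝ)
    (hrSR : Measurable rSR) (hrSDf : Measurable rSDf) (hrRDf : Measurable rRDf)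
    (hrLI : Measurable rLI) (hV : Measurable V)
    (hlawSR : Measure.map rSR P = expMeasure (1 / βSR))
    (hlawSDf : Measure.map rSDf P = expMeasure (1 / βSDf))
    (hlawRDf : Measure.map rRDf P = expMeasure (1 / βRDf))
    (hlawLI : Measure.map rLI P = expMeasure (1 / βLI))
    (hlawV : Measure.map V P = expMeasure (1 / βRR))
    (hindep : iIndepFun ![rSR, rSDf, rRDf, rLI, V] P)
    (δ w an af γth : ℝ)
    (hδ : δ ∈ Set.Ioc (0 : ℝ) 1) (hw : w = 0 ∨ w = 1)
    (han : 0 < an) (hanf : an < af) (hsum : an + af = 1)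
    (hγth : 0 < γth) (hdec : an * γth < af)
    (Pout : ℝ → ℝ)
    (hPout : ∀ g : ℝ,
      Pout g =
        (P {ω | max (af * rSR ω * g /
                    (an * rSR ω * g + (V ω) ^ 2 * δ * g + rLI ω * w * g + 1))
                 (af * rSDf ω * g / (an * rSDf ω * g + 1)) < γth}).toReal
        + (P {ω | γth ≤ af * rSR ω * g /
                    (an * rSR ω * g + (V ω) ^ 2 * δ * g + rLI ω * w * g + 1)
               ∧ max (af * rRDf ω * g / (an * rRDf ω * g + 1))
                     (af * rSDf ω * g / (an * rSDf ω * g + 1)) < γth}).toReal) :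
    Tendsto (fun g : ℝ => -Real.log (Pout g) / Real.log g) atTop (nhds 1) :=
  diversity_order_far_device_general P βSR βRR βLI βSDf hβSR hβRR hβSDf rSR rSDf rRDf rLI V hrSR
    hrSDf hrLI hV hlawSR hlawSDf hlawLI hlawV hindep δ w an af γth hδ hw han hγth hdec Pout hPout
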